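/- If v is a λ,μ-Catalan word, then applying v to a state of the two-stacks-in-series machine leaves the input untouched, moves |v|/2 elements from the top of stack 1 to the output (in some permuted order), and restores stack 2 to its original contents. -/
import Mathlib


namespace TwoStacks

/-- A state of the two-stacks-in-series machine: remaining input,
stack 1, stack 2 (tops at the head), and the output so far. -/
structure St where
  inp : List ℕ
  s1 : List ℕ
  s2 : List ℕ
  out : List ℕ
deriving DecidableEq

/-- The three moves. -/
inductive Mv
  | rho  -- input → stack 1
  | lam  -- stack 1 → stack 2
  | mu   -- stack 2 → output
deriving DecidableEq

/-- One move of the machine (`none` if the move is not applicable). -/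
def step : Mv → St → Option St
  | .rho, ⟨x :: xs, s1, s2, o⟩ => some ⟨xs, x :: s1, s2, o⟩
  | .lam, ⟨i, x :: xs, s2, o⟩ => some ⟨i, xs, x :: s2, o⟩
  | .mu,  ⟨i, s1, x :: xs, o⟩ => some ⟨i, s1, xs, o ++ [x]⟩
  | _, _ => none

/-- Run a word of moves on a state. -/
def run (w : List Mv) (s : St) : Option St :=
  w.foldlM (fun s m => step m s) s

/-- The list 1,2,…,n. -/
def idSeq (n : ℕ) : List ℕ := (List.range n).map (· + 1)

/-- The one-line notation p(1),…,p(n) (values in {1,…,n}) of a permutation. -/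
def permList {n : ℕ} (p : Equiv.Perm (Fin n)) : List ℕ :=
  List.ofFn fun i => (p i : ℕ) + 1

/-- p is achievable: from input 1,…,n some word of moves outputs p(1),…,p(n). -/
def Achievable {n : ℕ} (p : Equiv.Perm (Fin n)) : Prop :=
  ∃ w, run w ⟨idSeq n, [], [], []⟩ = some ⟨[], [], [], permList p⟩

/-- p is sortable: from input p(1),…,p(n) some word of moves outputs 1,…,n. -/
def Sortable {n : ℕ} (p : Equiv.Perm (Fin n)) : Prop :=
  ∃ w, run w ⟨permList p, [], [], []⟩ = some ⟨[], [], [], idSeq n⟩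

/-- A list of (distinct) naturals is achievable as an output. -/
def AchList (l : List ℕ) : Prop :=
  ∃ w, run w ⟨idSeq l.length, [], [], []⟩ = some ⟨[], [], [], l⟩

/-- Standardization (pattern) of a list with distinct entries:
each entry is replaced by its rank (1-based). -/
def std (l : List ℕ) : List ℕ :=
  l.map fun x => (l.filter (· ≤ x)).length

/-- An operation sequence of length 3n: n of each letter, and every
prefix has #ρ ≥ #λ ≥ #μ. -/
def OpSeq (n : ℕ) (w : List Mv) : Prop :=
  w.length = 3 * n ∧ w.count .rho = n ∧ w.count .lam = n ∧ w.count .mu = n ∧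
  ∀ u, u <+: w → u.count .mu ≤ u.count .lam ∧ u.count .lam ≤ u.count .rho

/-- An x,y-Catalan word: word over {x,y} with equally many x's and y's
in which every prefix has at least as many x's as y's. -/
def CatWord (x y : Mv) (w : List Mv) : Prop :=
  (∀ m ∈ w, m = x ∨ m = y) ∧ w.count x = w.count y ∧
  ∀ u, u <+: w → u.count y ≤ u.count x

/-- Two words have the same effect: applied to any state on which both
are applicable, they give the same resulting state. -/
def SameEffect (v v' : List Mv) : Prop :=
  ∀ s t t', run v s = some t → run v' s = some t' → t = t'

/-- Rank of a letter for the order ρ < λ < μ. -/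
def rk : Mv → ℕ
  | .rho => 0
  | .lam => 1
  | .mu => 2

/-- The order ρ < λ < μ on letters. -/
def mlt (a b : Mv) : Prop := rk a < rk b

/-- Lexicographic order on words induced by ρ < λ < μ. -/
def wordLt (v v' : List Mv) : Prop := List.Lex mlt v v'

/-- No entry is immediately followed by its successor. -/
def IncAvoid (l : List ℕ) : Prop :=
  ∀ j (h : j + 1 < l.length), l.get ⟨j + 1, h⟩ ≠ l.get ⟨j, by omega⟩ + 1

lemma run_cons (m : Mv) (w : List Mv) (s : St) :
    run (m :: w) s = (step m s).bind (run w) := by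
  cases h : step m s <;> simp [run, List.foldlM, h]

lemma main_aux : ∀ (v : List Mv), (∀ x ∈ v, x = Mv.lam ∨ x = Mv.mu) →
    ∀ (c : ℕ) (e base : List ℕ) (s t : St),
    run v s = some t →
    (∀ u, u <+: v → u.count Mv.mu ≤ u.count Mv.lam + c) →
    s.s2 = e ++ base → e.length = c →
    t.inp = s.inp ∧ t.s1 = s.s1.drop (v.count Mv.lam) ∧
    ∃ m r, t.s2 = r ++ base ∧ t.out = s.out ++ m ∧
      m.length = v.count Mv.mu ∧
      (m ++ r).Perm (e ++ s.s1.take (v.count Mv.lam)) := by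
  intro v
  induction v with
  | nil =>
    intro _ c e base s t hrun _ hs2 _
    simp [run] at hrun
    subst hrun
    exact ⟨rfl, by simp, [], e, by simpa using hs2, by simp, by simp, by simp⟩
  | cons a v ih =>
    intro hlet c e base s t hrun hpre hs2 hlen
    rw [run_cons] at hrun
    rcases hlet a (by simp) with ha | ha <;> subst ha
    · -- lam case
      obtain ⟨i, s1, s2, o⟩ := s
      cases s1 with
      | nil => simp [step] at hrun
      | cons x xs =>
        simp only [step, Option.bind_some, Option.bind_some] at hrun
        have hpre' : ∀ u, u <+: v → u.count Mv.mu ≤ u.count Mv.lam + (c + 1) := by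
          intro u hu
          have := hpre (Mv.lam :: u) (List.cons_prefix_cons.mpr ⟨rfl, hu⟩)
          simp [List.count_cons] at this
          omega
        have := ih (fun x hx => hlet x (by simp [hx])) (c + 1) (x :: e) base
          ⟨i, xs, x :: s2, o⟩ t hrun hpre' (by simpa using hs2) (by simp [hlen])
        obtain ⟨h1, h2, m, r, h3, h4, h5, h6⟩ := this
        refine ⟨h1, ?_, m, r, h3, h4, ?_, ?_⟩
        · simpa [List.count_cons] using h2
        · simpa [List.count_cons] using h5
        · have hc : List.count Mv.lam (Mv.lam :: v) = List.count Mv.lam v + 1 := by simp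
          rw [hc, List.take_succ_cons]
          exact h6.trans List.perm_middle.symm
    · -- mu case
      obtain ⟨i, s1, s2, o⟩ := s
      cases s2 with
      | nil => simp [step] at hrun
      | cons y ys =>
        simp only [step, Option.bind_some, Option.bind_some] at hrun
        cases e with
        | nil =>
          have := hpre [Mv.mu] ⟨v, rfl⟩
          simp [List.count_cons] at this
          simp at hlen
          omega
        | cons y0 e' =>
          simp only [List.cons_append, List.cons.injEq] at hs2
          obtain ⟨rfl, hys⟩ := hs2
          have hpre' : ∀ u, u <+: v → u.count Mv.mu ≤ u.count Mv.lam + (c - 1) := by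
            intro u hu
            have := hpre (Mv.mu :: u) (List.cons_prefix_cons.mpr ⟨rfl, hu⟩)
            have hc : 1 ≤ c := by
              have := hpre [Mv.mu] ⟨v, rfl⟩
              simp [List.count_cons] at this; omega
            simp [List.count_cons] at this
            omega
          have := ih (fun x hx => hlet x (by simp [hx])) (c - 1) e' base
            ⟨i, s1, ys, o ++ [y]⟩ t hrun hpre' (by simpa using hys)
            (by simp at hlen; omega)
          obtain ⟨h1, h2, m, r, h3, h4, h5, h6⟩ := this
          refine ⟨h1, ?_, y :: m, r, h3, by simp [h4], ?_, ?_⟩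
          · simpa [List.count_cons] using h2
          · simp [List.count_cons, h5]
          · have hc : List.count Mv.lam (Mv.mu :: v) = List.count Mv.lam v := by simp
            rw [hc]
            exact h6.cons y

lemma length_eq_counts {v : List Mv} (h : ∀ x ∈ v, x = Mv.lam ∨ x = Mv.mu) :
    v.length = v.count Mv.lam + v.count Mv.mu := by
  induction v with
  | nil => simp
  | cons a v ih =>
    have := ih (fun x hx => h x (by simp [hx]))
    rcases h a (by simp) with rfl | rfl <;>
      simp [List.count_cons, this] <;> omega

theorem lam_mu_catalan_word_effect (v : List Mv) (hv : CatWord Mv.lam Mv.mu v)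
    (s t : St) (h : run v s = some t) :
    t.inp = s.inp ∧ t.s2 = s.s2 ∧ t.s1 = s.s1.drop (v.length / 2) ∧
    ∃ m : List ℕ, m.Perm (s.s1.take (v.length / 2)) ∧ t.out = s.out ++ m := by
  obtain ⟨hlet, hbal, hpre⟩ := hv
  have := main_aux v hlet 0 [] s.s2 s t h
    (fun u hu => by simpa using hpre u hu) (by simp) rfl
  obtain ⟨h1, h2, m, r, h3, h4, h5, h6⟩ := this
  have hlen := length_eq_counts hlet
  have hk : v.count Mv.lam = v.length / 2 := by omega
  have hr : r = [] := by
    have := h6.length_eq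
    simp at this
    have : r.length = 0 := by
      have htake : (s.s1.take (v.count Mv.lam)).length ≤ v.count Mv.lam := by
        simp
      omega
    exact List.length_eq_zero_iff.mp this
  subst hr
  refine ⟨h1, by simpa using h3, by rw [← hk]; exact h2, m, ?_, h4⟩
  rw [← hk]
  simpa using h6

end TwoStacks
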